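/- arXiv:1412.0515 — 2 statements merged into one kernel-verified Lean document; each statement's English description precedes it below -/
import Mathlib

section
/- If G is a finite simple graph of order n with minimum degree δ = δ(G) ≥ 3, then the restrained double domination number satisfies γ_{2r}(G) ≤ n − δ + 1. -/
/-!
Remove a star from `G`: a vertex `x` together with `δ - 2` of its neighbours, a set `D` of
`δ - 1` vertices. Its complement `S` has `n - δ + 1` vertices and is a restrained double
dominating set. A vertex outside `D` loses at most `δ - 1` neighbours to `D`, so keeps one in `S`;
a vertex of `D` is not its own neighbour, so loses at most `δ - 2` and keeps two in `S`; and since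
`δ ≥ 3` the star has a leaf, so every vertex of `D` has a neighbour in `D`.
-/

open Finset

/-- A set `S` of vertices is a `(k,k',k'')`-dominating set if every vertex in `S` has at
least `k` neighbors in `S`, and every vertex not in `S` has at least `k'` neighbors in `S`
and at least `k''` neighbors outside `S`. -/
def SimpleGraph.IsKkkDomSet {V : Type*} [Fintype V] [DecidableEq V] (G : SimpleGraph V)
    [DecidableRel G.Adj] (k k' k'' : ℕ) (S : Finset V) : Prop :=
  (∀ v ∈ S, k ≤ (G.neighborFinset v ∩ S).card) ∧
  (∀ v ∉ S, k' ≤ (G.neighborFinset v ∩ S).card ∧ k'' ≤ (G.neighborFinset v \ S).card)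

/-- The `(k,k',k'')`-domination number: the minimum cardinality of a
`(k,k',k'')`-dominating set. -/
noncomputable def SimpleGraph.kkkDomNum {V : Type*} [Fintype V] [DecidableEq V]
    (G : SimpleGraph V) [DecidableRel G.Adj] (k k' k'' : ℕ) : ℕ :=
  sInf {n | ∃ S : Finset V, G.IsKkkDomSet k k' k'' S ∧ S.card = n}

namespace SimpleGraph

variable {V : Type*} [Fintype V] [DecidableEq V] (G : SimpleGraph V) [DecidableRel G.Adj]

theorem kkkDomNum_le_card {k k' k'' : ℕ} {S : Finset V} (hS : G.IsKkkDomSet k k' k'' S) :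
    G.kkkDomNum k k' k'' ≤ #S :=
  Nat.sInf_le ⟨S, hS, rfl⟩

theorem isKkkDomSet_compl_iff (k k' k'' : ℕ) (D : Finset V) :
    G.IsKkkDomSet k k' k'' Dᶜ ↔
      (∀ v ∉ D, k ≤ #(G.neighborFinset v \ D)) ∧
      ∀ v ∈ D, k' ≤ #(G.neighborFinset v \ D) ∧ k'' ≤ #(G.neighborFinset v ∩ D) := by
  have hinter : ∀ v, G.neighborFinset v ∩ Dᶜ = G.neighborFinset v \ D := fun v => by
    ext; simp
  have hsdiff : ∀ v, G.neighborFinset v \ Dᶜ = G.neighborFinset v ∩ D := fun v => by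
    ext; simp
  simp only [IsKkkDomSet, mem_compl, not_not, hinter, hsdiff]

theorem degree_sub_card_erase_le_card_neighborFinset_sdiff (v : V) (D : Finset V) :
    G.degree v - #(D.erase v) ≤ #(G.neighborFinset v \ D) := by
  have hsub : G.neighborFinset v ∩ D ⊆ D.erase v := fun w hw => by
    rw [mem_inter, mem_neighborFinset] at hw
    exact mem_erase.2 ⟨hw.1.ne.symm, hw.2⟩
  have hsplit := card_sdiff_add_card_inter (G.neighborFinset v) D
  have := card_le_card hsub
  rw [card_neighborFinset_eq_degree] at hsplit
  omega

theorem exists_adj_mem_insert_of_subset_neighborFinset {x : V} {T : Finset V}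
    (hT : T ⊆ G.neighborFinset x) (hTne : T.Nonempty) :
    ∀ v ∈ insert x T, (G.neighborFinset v ∩ insert x T).Nonempty := by
  intro v hv
  rcases mem_insert.1 hv with rfl | hvT
  · obtain ⟨t, ht⟩ := hTne
    exact ⟨t, mem_inter.2 ⟨hT ht, mem_insert_of_mem ht⟩⟩
  · refine ⟨x, mem_inter.2 ⟨?_, mem_insert_self x T⟩⟩
    exact (G.mem_neighborFinset v x).2 ((G.mem_neighborFinset x v).1 (hT hvT)).symm

end SimpleGraph

open SimpleGraph in
/-- If δ(G) ≥ 3, then γ_{2r}(G) = γ_{(1,2,1)}(G) ≤ n − δ + 1. -/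
theorem stmt_12 {V : Type*} [Fintype V] [DecidableEq V] (G : SimpleGraph V)
    [DecidableRel G.Adj] (hδ : 3 ≤ G.minDegree) :
    G.kkkDomNum 1 2 1 ≤ Fintype.card V - G.minDegree + 1 := by
  obtain ⟨x⟩ : Nonempty V := by
    by_contra h
    have : IsEmpty V := not_nonempty_iff.1 h
    rw [minDegree_of_subsingleton] at hδ
    omega
  have hδx := G.minDegree_le_degree x
  have hδn := G.degree_lt_card_verts x
  obtain ⟨T, hTx, hTcard⟩ := exists_subset_card_eq
    (show G.minDegree - 2 ≤ #(G.neighborFinset x) by rw [card_neighborFinset_eq_degree]; omega)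
  have hxT : x ∉ T := fun h => G.notMem_neighborFinset_self x (hTx h)
  have hD : #(insert x T) = G.minDegree - 1 := by rw [card_insert_of_notMem hxT]; omega
  have hdom : G.IsKkkDomSet 1 2 1 (insert x T)ᶜ := by
    refine (G.isKkkDomSet_compl_iff 1 2 1 _).2 ⟨fun v hv => ?_, fun v hv => ⟨?_, ?_⟩⟩
    · have := G.degree_sub_card_erase_le_card_neighborFinset_sdiff v (insert x T)
      rw [erase_eq_of_notMem hv] at this
      have := G.minDegree_le_degree v
      omega
    · have := G.degree_sub_card_erase_le_card_neighborFinset_sdiff v (insert x T)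
      rw [card_erase_of_mem hv] at this
      have := G.minDegree_le_degree v
      omega
    · exact one_le_card.2 <| G.exists_adj_mem_insert_of_subset_neighborFinset hTx
        (card_pos.1 (by omega)) v hv
  calc G.kkkDomNum 1 2 1 ≤ #(insert x T)ᶜ := G.kkkDomNum_le_card hdom
    _ = Fintype.card V - G.minDegree + 1 := by rw [card_compl, hD]; omega
end

section
/- If G is a finite simple graph of order n and size m without isolated vertices, then the total restrained domination number satisfies γ_t^r(G) ≥ 3n/2 − m. -/
/-!
Count edge ends relative to a minimum total restrained dominating set `S`: every vertex of `S`
has a neighbour in `S`, and every vertex outside `S` has a neighbour in `S` and one outside `S`.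
The edges between `S` and its complement are seen from both sides, so
`2m ≥ |S| + 3|V \ S| = 3n - 2|S|`.
-/

open Finset

namespace SimpleGraph

variable {V : Type*} [Fintype V] [DecidableEq V] (G : SimpleGraph V) [DecidableRel G.Adj]

theorem sum_card_neighborFinset_sdiff_eq_sum_compl (S : Finset V) :
    ∑ v ∈ S, #(G.neighborFinset v \ S) = ∑ v ∈ Sᶜ, #(G.neighborFinset v ∩ S) := by
  have h_sdiff : ∀ v, G.neighborFinset v \ S = Sᶜ.filter (G.Adj v) := fun v => by
    ext w; simp [and_comm]
  have h_inter : ∀ v, G.neighborFinset v ∩ S = S.filter (G.Adj v) := fun v => by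
    ext w; simp [and_comm]
  simp only [h_sdiff, h_inter, card_filter]
  rw [sum_comm]
  exact sum_congr rfl fun w _ => sum_congr rfl fun v _ => by simp [G.adj_comm]

theorem two_mul_card_edgeFinset_eq_sum (S : Finset V) :
    2 * #G.edgeFinset = ∑ v ∈ S, #(G.neighborFinset v ∩ S)
      + 2 * ∑ v ∈ Sᶜ, #(G.neighborFinset v ∩ S) + ∑ v ∈ Sᶜ, #(G.neighborFinset v \ S) := by
  have h_degree : ∀ v, G.degree v = #(G.neighborFinset v ∩ S) + #(G.neighborFinset v \ S) :=
    fun v => by rw [card_inter_add_card_sdiff, card_neighborFinset_eq_degree]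
  rw [← G.sum_degrees_eq_twice_card_edges, ← sum_add_sum_compl S]
  simp only [h_degree, sum_add_distrib, sum_card_neighborFinset_sdiff_eq_sum_compl]
  ring

variable {G} {k k' k'' : ℕ}

theorem isKkkDomSet_univ (h : ∀ v, k ≤ G.degree v) : G.IsKkkDomSet k k' k'' univ :=
  ⟨fun v _ => by rw [inter_univ, card_neighborFinset_eq_degree]; exact h v,
    fun v hv => absurd (mem_univ v) hv⟩

theorem exists_isKkkDomSet_card_eq_kkkDomNum {S : Finset V} (hS : G.IsKkkDomSet k k' k'' S) :
    ∃ T, G.IsKkkDomSet k k' k'' T ∧ #T = G.kkkDomNum k k' k'' :=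
  Nat.sInf_mem (s := {n | ∃ T, G.IsKkkDomSet k k' k'' T ∧ #T = n}) ⟨_, S, hS, rfl⟩

theorem IsKkkDomSet.card_le {S : Finset V} (hS : G.IsKkkDomSet k k' k'' S) :
    k * #S + (2 * k' + k'') * #Sᶜ ≤ 2 * #G.edgeFinset := by
  have h_in : #S • k ≤ ∑ v ∈ S, #(G.neighborFinset v ∩ S) :=
    card_nsmul_le_sum _ _ _ hS.1
  have h_cut : #Sᶜ • k' ≤ ∑ v ∈ Sᶜ, #(G.neighborFinset v ∩ S) :=
    card_nsmul_le_sum _ _ _ fun v hv => (hS.2 v (mem_compl.mp hv)).1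
  have h_out : #Sᶜ • k'' ≤ ∑ v ∈ Sᶜ, #(G.neighborFinset v \ S) :=
    card_nsmul_le_sum _ _ _ fun v hv => (hS.2 v (mem_compl.mp hv)).2
  rw [G.two_mul_card_edgeFinset_eq_sum S]
  simp only [smul_eq_mul] at h_in h_cut h_out
  linarith

end SimpleGraph

/-- If G has no isolated vertices, then γ_t^r(G) = γ_{(1,1,1)}(G) ≥ 3n/2 − m. -/
theorem stmt_13 {V : Type*} [Fintype V] [DecidableEq V] (G : SimpleGraph V)
    [DecidableRel G.Adj] (h : ∀ v : V, 0 < G.degree v) :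
    3 * (Fintype.card V : ℝ) / 2 - G.edgeFinset.card ≤ G.kkkDomNum 1 1 1 := by
  obtain ⟨S, hS, hS_card⟩ := SimpleGraph.exists_isKkkDomSet_card_eq_kkkDomNum
    (SimpleGraph.isKkkDomSet_univ (k := 1) (k' := 1) (k'' := 1) h)
  have h_edges : (#S : ℝ) + 3 * #Sᶜ ≤ 2 * #G.edgeFinset := by
    have := hS.card_le
    rw [one_mul] at this
    exact_mod_cast this
  have h_order : (#S : ℝ) + #Sᶜ = Fintype.card V := by exact_mod_cast card_add_card_compl S
  rw [← hS_card]
  linarith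
end
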